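/- arXiv:2506.21084 — 5 statements merged into one kernel-verified Lean document; each statement's English description precedes it below -/
import Mathlib

section
/- The von Neumann neighborhood N = {(0,1), (1,0), (0,−1), (−1,0)} does not admit a timed crossover gate: for all sizes M, N' ∈ ℕ⁺ and all delays T ∈ ℕ⁺, no timed crossover gate of size M × N' and delay T exists for this sandpile model. -/
/-! Sandpile models on ℤ² and timed crossover gates. -/

abbrev Cell : Type := ℤ × ℤ
abbrev Config : Type := Cell → ℕ

namespace Sandpile

/-- The threshold of a sandpile model is the cardinality of its neighborhood. -/
def θ (𝒩 : Finset Cell) : ℕ := 𝒩.card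

/-- The parallel sandpile dynamics: each cell reaching the threshold topples,
sending one grain to each of its out-neighbors. -/
def F (𝒩 : Finset Cell) (c : Config) : Config := fun p =>
  c p - θ 𝒩 * (if θ 𝒩 ≤ c p then 1 else 0)
    + ∑ p' ∈ 𝒩, (if θ 𝒩 ≤ c (p - p') then 1 else 0)

/-- The configuration with a single grain at cell `p`. -/
def one (p : Cell) : Config := fun q => if q = p then 1 else 0

/-- A configuration is stable when every cell is below the threshold. -/
def Stable (𝒩 : Finset Cell) (c : Config) : Prop := ∀ p, c p < θ 𝒩

/-- The rectangle {0,…,M−1} × {0,…,N'−1}. -/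
def Rect (M N' : ℕ) : Set Cell :=
  {p | 0 ≤ p.1 ∧ p.1 < (M : ℤ) ∧ 0 ≤ p.2 ∧ p.2 < (N' : ℤ)}

/-- The four corners of the rectangle. -/
def Corners (M N' : ℕ) : Set Cell :=
  {(0, 0), ((M : ℤ) - 1, 0), (0, (N' : ℤ) - 1), ((M : ℤ) - 1, (N' : ℤ) - 1)}

/-- The four sides of the rectangle. -/
def side (M N' : ℕ) (i : Fin 4) : Set Cell :=
  if i = 0 then {p | p.1 = 0 ∧ 0 ≤ p.2 ∧ p.2 < (N' : ℤ)}
  else if i = 1 then {p | p.2 = 0 ∧ 0 ≤ p.1 ∧ p.1 < (M : ℤ)}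
  else if i = 2 then {p | p.1 = (M : ℤ) - 1 ∧ 0 ≤ p.2 ∧ p.2 < (N' : ℤ)}
  else {p | p.2 = (N' : ℤ) - 1 ∧ 0 ≤ p.1 ∧ p.1 < (M : ℤ)}

/-- A timed crossover gate of size M × N' and delay T for the sandpile model 𝒩:
a stable configuration `g` supported on the rectangle, together with four
non-corner cells `n`, `e`, `s`, `w` on four pairwise different sides, `n, s`
(resp. `w, e`) on opposite sides, such that adding a grain at `n` (resp. `w`)
makes `s` (resp. `e`) reach the threshold at time exactly `T`, while no cell
on the two other sides reaches the threshold at any time `t ≤ T`. -/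
def IsTimedCrossoverGate (𝒩 : Finset Cell) (M N' T : ℕ)
    (g : Config) (n e s w : Cell) : Prop :=
  Stable 𝒩 g ∧
  (∀ p, p ∉ Rect M N' → g p = 0) ∧
  n ∈ Rect M N' ∧ e ∈ Rect M N' ∧ s ∈ Rect M N' ∧ w ∈ Rect M N' ∧
  n ∉ Corners M N' ∧ e ∉ Corners M N' ∧ s ∉ Corners M N' ∧ w ∉ Corners M N' ∧
  ∃ iN iE iS iW : Fin 4,
    n ∈ side M N' iN ∧ e ∈ side M N' iE ∧ s ∈ side M N' iS ∧ w ∈ side M N' iW ∧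
    ((iN : ℤ) - (iS : ℤ)).natAbs = 2 ∧
    ((iW : ℤ) - (iE : ℤ)).natAbs = 2 ∧
    ({iN, iE, iS, iW} : Finset (Fin 4)) = Finset.univ ∧
    θ 𝒩 ≤ (F 𝒩)^[T] (g + one n) s ∧
    (∀ p ∈ side M N' iW ∪ side M N' iE, ∀ t ≤ T, (F 𝒩)^[t] (g + one n) p < θ 𝒩) ∧
    θ 𝒩 ≤ (F 𝒩)^[T] (g + one w) e ∧
    (∀ p ∈ side M N' iN ∪ side M N' iS, ∀ t ≤ T, (F 𝒩)^[t] (g + one w) p < θ 𝒩)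

/-!
Adding one grain at a boundary cell of the rectangle to a stable configuration supported on it,
no cell topples twice and no cell outside the rectangle topples. Compare the avalanches started
at `w` and at `n`. Every cell other than `w` that topples in the `w`-avalanche strictly before it
topples in the `n`-avalanche (if ever) was fed by a neighbour with the same property, so `e` is joined
to `w` by a path of such cells, and quietness keeps this path off the sides of `n` and `s`.
Symmetrically `s` is joined to `n` by a path off the sides of `w` and `e`. By a parity argument
the two paths meet, at a cell that would topple strictly earlier in each avalanche than in the
other.
-/

open Finset

section Dynamics

variable (𝒩 : Finset Cell)

def Topples (c : Config) (t : ℕ) (p : Cell) : Prop := θ 𝒩 ≤ (F 𝒩)^[t] c p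

instance (c : Config) (t : ℕ) (p : Cell) : Decidable (Topples 𝒩 c t p) :=
  inferInstanceAs (Decidable (_ ≤ _))

def topplings (c : Config) (t : ℕ) (p : Cell) : ℕ := #{i ∈ range t | Topples 𝒩 c i p}

def received (c : Config) (t : ℕ) (p : Cell) : ℕ := ∑ v ∈ 𝒩, topplings 𝒩 c t (p - v)

def TopplesAtMostOnce (c : Config) : Prop :=
  ∀ p t t', Topples 𝒩 c t p → Topples 𝒩 c t' p → t = t'

def TopplesBefore (c c' : Config) (p : Cell) : Prop :=
  ∀ t t', Topples 𝒩 c t p → Topples 𝒩 c' t' p → t < t'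

def IsPath (f : ℕ → Cell) (k : ℕ) : Prop := ∀ i < k, f (i + 1) - f i ∈ 𝒩

lemma F_add_theta_mul (c : Config) (p : Cell) :
    F 𝒩 c p + θ 𝒩 * (if θ 𝒩 ≤ c p then 1 else 0)
      = c p + ∑ v ∈ 𝒩, if θ 𝒩 ≤ c (p - v) then 1 else 0 := by
  simp only [F]
  split_ifs <;> omega

lemma topplings_succ (c : Config) (t : ℕ) (p : Cell) :
    topplings 𝒩 c (t + 1) p = topplings 𝒩 c t p + if Topples 𝒩 c t p then 1 else 0 := by
  simp only [topplings, card_filter, sum_range_succ]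

lemma iterate_F_add_theta_mul_topplings (c : Config) (t : ℕ) (p : Cell) :
    (F 𝒩)^[t] c p + θ 𝒩 * topplings 𝒩 c t p = c p + received 𝒩 c t p := by
  induction t generalizing p with
  | zero => simp [topplings, received]
  | succ t ih =>
    have hstep := F_add_theta_mul 𝒩 ((F 𝒩)^[t] c) p
    simp only [received, topplings_succ, sum_add_distrib, Function.iterate_succ_apply'] at ih ⊢
    simp only [Topples] at hstep ⊢
    linarith [ih p]

variable {𝒩}

lemma topplings_pos_iff {c : Config} {t : ℕ} {p : Cell} :
    0 < topplings 𝒩 c t p ↔ ∃ i < t, Topples 𝒩 c i p := by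
  simp [topplings, card_pos, filter_nonempty_iff]

lemma topplings_eq_zero_iff {c : Config} {t : ℕ} {p : Cell} :
    topplings 𝒩 c t p = 0 ↔ ∀ i < t, ¬ Topples 𝒩 c i p := by
  rw [← Nat.le_zero, ← not_lt, topplings_pos_iff]
  push Not
  rfl

lemma topplings_le_one_iff {c : Config} {t : ℕ} {p : Cell} :
    topplings 𝒩 c t p ≤ 1 ↔
      ∀ i < t, ∀ j < t, Topples 𝒩 c i p → Topples 𝒩 c j p → i = j := by
  simp only [topplings, card_le_one, mem_filter, mem_range]
  grind

lemma topplings_le_one_of_forall_lt {c : Config} {t : ℕ} {p : Cell}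
    (h : ∀ i < t, Topples 𝒩 c i p → topplings 𝒩 c i p = 0) : topplings 𝒩 c t p ≤ 1 := by
  refine topplings_le_one_iff.2 fun i hi j hj hpi hpj => ?_
  by_contra hij
  rcases Nat.lt_or_gt_of_ne hij with hlt | hlt
  · exact topplings_eq_zero_iff.1 (h j hj hpj) i hlt hpi
  · exact topplings_eq_zero_iff.1 (h i hi hpi) j hlt hpj

lemma TopplesAtMostOnce.topplings_eq_zero {c : Config} (hc : TopplesAtMostOnce 𝒩 c)
    {t : ℕ} {p : Cell} (hp : Topples 𝒩 c t p) : topplings 𝒩 c t p = 0 :=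
  topplings_eq_zero_iff.2 fun i hi hpi => hi.ne (hc p i t hpi hp)

lemma TopplesAtMostOnce.topplings_le_one {c : Config} (hc : TopplesAtMostOnce 𝒩 c)
    (t : ℕ) (p : Cell) : topplings 𝒩 c t p ≤ 1 :=
  topplings_le_one_of_forall_lt fun _ _ => hc.topplings_eq_zero

lemma received_le_theta {c : Config} {t : ℕ} (h : ∀ q, topplings 𝒩 c t q ≤ 1) (p : Cell) :
    received 𝒩 c t p ≤ θ 𝒩 := by
  simpa [received, θ] using sum_le_sum fun v (_ : v ∈ 𝒩) => h (p - v)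

lemma topplings_sub_pos_of_theta_le_received {c : Config} {t : ℕ} {p : Cell}
    (h : ∀ q, topplings 𝒩 c t q ≤ 1) (hp : θ 𝒩 ≤ received 𝒩 c t p) :
    ∀ v ∈ 𝒩, 0 < topplings 𝒩 c t (p - v) := by
  by_contra! ⟨v, hv, hv0⟩
  have : received 𝒩 c t p < ∑ _v ∈ 𝒩, 1 :=
    sum_lt_sum (fun w _ => h (p - w)) ⟨v, hv, by omega⟩
  rw [sum_const, smul_eq_mul, mul_one] at this
  exact absurd hp (not_le.2 this)

end Dynamics

section Avalanche

variable {𝒩 : Finset Cell}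

/-- A cell outside `R`, or a second toppling, needs `θ` grains, hence all in-neighbours toppled
earlier and lie in `R`: impossible by `hR`, and for the seed `a` (the only cell that can start
at `θ`) by `ha`. -/
theorem mem_and_topplings_eq_zero_of_topples {R : Set Cell}
    (hR : ∀ p ∉ R, ∃ v ∈ 𝒩, p - v ∉ R) {g : Config} (hg : Stable 𝒩 g)
    (hgR : ∀ p ∉ R, g p = 0) {a : Cell} (haR : a ∈ R) (ha : ∃ v ∈ 𝒩, a - v ∉ R)
    (t : ℕ) (p : Cell) (hp : Topples 𝒩 (g + one a) t p) :
    p ∈ R ∧ topplings 𝒩 (g + one a) t p = 0 := by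
  induction t using Nat.strong_induction_on generalizing p with
  | _ t ih =>
  set c := g + one a
  have h1 : ∀ q, topplings 𝒩 c t q ≤ 1 := fun q =>
    topplings_le_one_of_forall_lt fun i hi hq => (ih i hi q hq).2
  have hnbrs (h : θ 𝒩 ≤ received 𝒩 c t p) : ∀ v ∈ 𝒩, p - v ∈ R := fun v hv => by
    obtain ⟨i, hi, hq⟩ := topplings_pos_iff.1 (topplings_sub_pos_of_theta_le_received h1 h v hv)
    exact (ih i hi _ hq).1
  have hodo := iterate_F_add_theta_mul_topplings 𝒩 c t p
  have hrec := received_le_theta h1 p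
  have hcp : c p = g p + if p = a then 1 else 0 := rfl
  have hgp := hg p
  have hp' : θ 𝒩 ≤ (F 𝒩)^[t] c p := hp
  constructor
  · by_contra hpR
    have hpa : p ≠ a := fun h => hpR (h ▸ haR)
    rw [if_neg hpa, hgR p hpR] at hcp
    obtain ⟨v, hv, hvR⟩ := hR p hpR
    exact hvR (hnbrs (by omega) v hv)
  · by_contra hU
    have hθU : θ 𝒩 ≤ θ 𝒩 * topplings 𝒩 c t p := Nat.le_mul_of_pos_right _ (Nat.pos_of_ne_zero hU)
    have hpa : p = a := by
      by_contra hpa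
      rw [if_neg hpa] at hcp
      omega
    rw [if_pos hpa] at hcp
    obtain ⟨v, hv, hvR⟩ := ha
    exact hvR (hpa ▸ hnbrs (by omega) v hv)

lemma topplesAtMostOnce_iff {c : Config} :
    TopplesAtMostOnce 𝒩 c ↔ ∀ t p, Topples 𝒩 c t p → topplings 𝒩 c t p = 0 := by
  refine ⟨fun hc t p => hc.topplings_eq_zero, fun h p t t' ht ht' => ?_⟩
  by_contra hne
  rcases Nat.lt_or_gt_of_ne hne with hlt | hlt
  · exact topplings_eq_zero_iff.1 (h t' p ht') t hlt ht
  · exact topplings_eq_zero_iff.1 (h t p ht) t' hlt ht'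

lemma exists_topples_le_of_received_le {c c' : Config} {u : ℕ} {z : Cell}
    (hz : Topples 𝒩 c u z) (hz0 : topplings 𝒩 c u z = 0) (hcz : c z ≤ c' z)
    (hrec : received 𝒩 c u z ≤ received 𝒩 c' u z) : ∃ t ≤ u, Topples 𝒩 c' t z := by
  have hodo := iterate_F_add_theta_mul_topplings 𝒩 c u z
  have hodo' := iterate_F_add_theta_mul_topplings 𝒩 c' u z
  have hz' : θ 𝒩 ≤ (F 𝒩)^[u] c z := hz
  rcases Nat.eq_zero_or_pos (topplings 𝒩 c' u z) with h0 | hpos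
  · rw [h0] at hodo'
    rw [hz0] at hodo
    exact ⟨u, le_rfl, show θ 𝒩 ≤ _ by omega⟩
  · obtain ⟨t, ht, htop⟩ := topplings_pos_iff.1 hpos
    exact ⟨t, ht.le, htop⟩

lemma IsPath.snoc {f : ℕ → Cell} {k : ℕ} {z : Cell} (hf : IsPath 𝒩 f k) (hz : z - f k ∈ 𝒩) :
    IsPath 𝒩 (fun i => if i ≤ k then f i else z) (k + 1) := by
  intro i hi
  rcases Nat.lt_or_eq_of_le (Nat.le_of_lt_succ hi) with hik | rfl
  · simpa [hik.le, Nat.succ_le_of_lt hik] using hf i hik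
  · simpa using hz

/-- If every in-neighbour that fed `z` under `c` had also toppled in time under `c'`, then `z`
would topple no later under `c'`; so `z` is fed by an in-neighbour toppling strictly earlier
under `c`, and the path is built backwards from `z` to `w`. -/
theorem topples_le_or_exists_path_topplesBefore {c c' : Config} {w : Cell}
    (hle : ∀ z ≠ w, c z ≤ c' z) (hc : TopplesAtMostOnce 𝒩 c) {u : ℕ} {z : Cell}
    (hz : Topples 𝒩 c u z) :
    (∃ t ≤ u, Topples 𝒩 c' t z) ∨
      ∃ k f, f 0 = w ∧ f k = z ∧ IsPath 𝒩 f k ∧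
        ∀ i ≤ k, (∃ u' ≤ u, Topples 𝒩 c u' (f i)) ∧ TopplesBefore 𝒩 c c' (f i) := by
  induction u using Nat.strong_induction_on generalizing z with
  | _ u ih =>
  by_cases hearly : ∃ t ≤ u, Topples 𝒩 c' t z
  · exact .inl hearly
  right
  have hbefore : TopplesBefore 𝒩 c c' z := fun t t' ht ht' => by
    rw [hc z t u ht hz]
    by_contra! h
    exact hearly ⟨t', h, ht'⟩
  by_cases hzw : z = w
  · subst hzw
    exact ⟨0, fun _ => z, rfl, rfl, fun i hi => absurd hi (Nat.not_lt_zero i),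
      fun i _ => ⟨⟨u, le_rfl, hz⟩, hbefore⟩⟩
  obtain ⟨v, hv, u', hu', hu'top, hlate⟩ : ∃ v ∈ 𝒩, ∃ u' < u, Topples 𝒩 c u' (z - v) ∧
      ∀ t < u, ¬ Topples 𝒩 c' t (z - v) := by
    by_contra! hfed
    refine hearly (exists_topples_le_of_received_le hz (hc.topplings_eq_zero hz) (hle z hzw) ?_)
    refine sum_le_sum fun v hv => ?_
    rcases Nat.eq_zero_or_pos (topplings 𝒩 c u (z - v)) with h0 | hpos
    · omega
    · obtain ⟨u', hu', hu'top⟩ := topplings_pos_iff.1 hpos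
      have := topplings_pos_iff.2 (hfed v hv u' hu' hu'top)
      have := hc.topplings_le_one u (z - v)
      omega
  have hnot_early : ¬ ∃ t ≤ u', Topples 𝒩 c' t (z - v) := fun ⟨t, ht, htop⟩ =>
    hlate t (ht.trans_lt hu') htop
  obtain ⟨k, f, hf0, hfk, hf, hcells⟩ := (ih u' hu' hu'top).resolve_left hnot_early
  refine ⟨k + 1, fun i => if i ≤ k then f i else z, by simp [hf0], by simp,
    hf.snoc (by simpa [hfk] using hv), fun i hi => ?_⟩
  by_cases hik : i ≤ k
  · obtain ⟨⟨u'', hu'', htop⟩, hb⟩ := hcells i hik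
    simpa [hik] using And.intro ⟨u'', hu''.trans hu'.le, htop⟩ hb
  · simpa [hik] using And.intro ⟨u, le_rfl, hz⟩ hbefore

end Avalanche

def vonNeumann : Finset Cell := {(0, 1), (1, 0), (0, -1), (-1, 0)}

lemma coords_of_sub_mem_vonNeumann {p q : Cell} (h : q - p ∈ vonNeumann) :
    (q.1 = p.1 ∧ q.2 = p.2 + 1) ∨ (q.1 = p.1 + 1 ∧ q.2 = p.2) ∨
      (q.1 = p.1 ∧ q.2 = p.2 - 1) ∨ (q.1 = p.1 - 1 ∧ q.2 = p.2) := by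
  simp only [vonNeumann, mem_insert, mem_singleton, Prod.ext_iff, Prod.fst_sub,
    Prod.snd_sub] at h
  omega

lemma exists_sub_notMem_rect {M N' : ℕ} {p : Cell}
    (hp : p.1 ≤ 0 ∨ (M : ℤ) - 1 ≤ p.1 ∨ p.2 ≤ 0 ∨ (N' : ℤ) - 1 ≤ p.2) :
    ∃ v ∈ vonNeumann, p - v ∉ Rect M N' := by
  simp only [vonNeumann, Rect, mem_insert, mem_singleton, exists_eq_or_imp, exists_eq_left,
    Set.mem_ofPred_eq, Prod.fst_sub, Prod.snd_sub]
  omega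

lemma exists_sub_notMem_rect_of_notMem {M N' : ℕ} {p : Cell} (hp : p ∉ Rect M N') :
    ∃ v ∈ vonNeumann, p - v ∉ Rect M N' := by
  simp only [Rect, Set.mem_ofPred_eq] at hp
  exact exists_sub_notMem_rect (by omega)

lemma exists_sub_notMem_rect_of_mem_side {M N' : ℕ} {p : Cell} {i : Fin 4}
    (hp : p ∈ side M N' i) : ∃ v ∈ vonNeumann, p - v ∉ Rect M N' := by
  apply exists_sub_notMem_rect
  fin_cases i <;> simp [side] at hp <;> omega

section Crossing

lemma sum_range_mod_two_eq {f v : ℕ → ℕ} {k : ℕ}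
    (h : ∀ i < k, f i % 2 = (v i + v (i + 1)) % 2) :
    (∑ i ∈ range k, f i) % 2 = (v 0 + v k) % 2 := by
  induction k with
  | zero => simp only [sum_range_zero]; omega
  | succ k ih =>
    rw [sum_range_succ]
    have := ih fun i hi => h i (Nat.lt_succ_of_lt hi)
    have := h k (Nat.lt_succ_self k)
    omega

/-- The number of steps of `a` across the vertical line between the columns `q.1 - 1` and `q.1`,
strictly below row `q.2`. -/
def crossingsBelow (a : ℕ → Cell) (k : ℕ) (q : Cell) : ℕ :=
  #{i ∈ range k | (a i).2 < q.2 ∧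
    ((a i).1 = q.1 - 1 ∧ (a (i + 1)).1 = q.1 ∨ (a i).1 = q.1 ∧ (a (i + 1)).1 = q.1 - 1)}

variable {a : ℕ → Cell} {k : ℕ}

lemma crossingsBelow_up (ha : IsPath vonNeumann a k) {x y : ℤ} (hxy : ∀ i ≤ k, a i ≠ (x, y)) :
    crossingsBelow a k (x, y + 1) = crossingsBelow a k (x, y) := by
  simp only [crossingsBelow, card_filter]
  refine sum_congr rfl fun i hi => ?_
  have hi := mem_range.1 hi
  have h₀ := hxy i hi.le
  have h₁ := hxy (i + 1) hi
  simp only [ne_eq, Prod.ext_iff, not_and] at h₀ h₁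
  rcases coords_of_sub_mem_vonNeumann (ha i hi) with h | h | h | h <;> split_ifs <;> omega

lemma crossingsBelow_right_mod_two (ha : IsPath vonNeumann a k) {x y : ℤ}
    (h₀ : (a 0).1 ≠ x) (hk : (a k).1 ≠ x) (hxy : ∀ i ≤ k, a i ≠ (x, y)) :
    crossingsBelow a k (x + 1, y) % 2 = crossingsBelow a k (x, y) % 2 := by
  suffices (crossingsBelow a k (x + 1, y) + crossingsBelow a k (x, y)) % 2 = 0 by omega
  simp only [crossingsBelow, card_filter, ← sum_add_distrib]
  rw [sum_range_mod_two_eq (v := fun i => if (a i).1 = x ∧ (a i).2 < y then 1 else 0)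
    fun i hi => ?_]
  · split_ifs <;> omega
  have h₀ := hxy i hi.le
  have h₁ := hxy (i + 1) hi
  simp only [ne_eq, Prod.ext_iff, not_and] at h₀ h₁
  rcases coords_of_sub_mem_vonNeumann (ha i hi) with h | h | h | h <;> split_ifs <;> omega

lemma crossingsBelow_eq_zero {y : ℤ} (hy : ∀ i ≤ k, y ≤ (a i).2) (x : ℤ) :
    crossingsBelow a k (x, y) = 0 := by
  simp only [crossingsBelow, card_eq_zero, filter_eq_empty_iff, mem_range]
  intro i hi h
  exact absurd (hy i hi.le) (not_le.2 h.1)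

lemma crossingsBelow_mod_two_of_above (ha : IsPath vonNeumann a k) {y : ℤ}
    (hy : ∀ i ≤ k, (a i).2 < y) (x : ℤ) :
    crossingsBelow a k (x, y) % 2 =
      ((if x ≤ (a 0).1 then 1 else 0) + if x ≤ (a k).1 then 1 else 0) % 2 := by
  simp only [crossingsBelow, card_filter]
  refine sum_range_mod_two_eq (v := fun i => if x ≤ (a i).1 then 1 else 0) fun i hi => ?_
  have := hy i hi.le
  rcases coords_of_sub_mem_vonNeumann (ha i hi) with h | h | h | h <;> split_ifs <;> omega

lemma crossingsBelow_mod_two_eq_of_sub_mem (ha : IsPath vonNeumann a k) {p q : Cell}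
    (hpq : q - p ∈ vonNeumann) (hp : ∀ i ≤ k, a i ≠ p) (hq : ∀ i ≤ k, a i ≠ q)
    (hp_cols : (a 0).1 ≠ p.1 ∧ (a k).1 ≠ p.1) (hq_cols : (a 0).1 ≠ q.1 ∧ (a k).1 ≠ q.1) :
    crossingsBelow a k q % 2 = crossingsBelow a k p % 2 := by
  obtain ⟨x, y⟩ := p
  obtain ⟨x', y'⟩ := q
  have hstep := coords_of_sub_mem_vonNeumann hpq
  dsimp only at hstep hp_cols hq_cols
  rcases hstep with ⟨rfl, rfl⟩ | ⟨rfl, rfl⟩ | ⟨rfl, rfl⟩ | ⟨rfl, rfl⟩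
  · rw [crossingsBelow_up ha hp]
  · exact crossingsBelow_right_mod_two ha hp_cols.1 hp_cols.2 hp
  · rw [← crossingsBelow_up ha hq, sub_add_cancel]
  · rw [← crossingsBelow_right_mod_two ha hq_cols.1 hq_cols.2 hq, sub_add_cancel]

lemma crossingsBelow_mod_two_eq_of_isPath (ha : IsPath vonNeumann a k) {b : ℕ → Cell} {l : ℕ}
    (hb : IsPath vonNeumann b l) (hab : ∀ i ≤ k, ∀ j ≤ l, a i ≠ b j)
    (hcols : ∀ j ≤ l, (a 0).1 ≠ (b j).1 ∧ (a k).1 ≠ (b j).1) :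
    crossingsBelow a k (b l) % 2 = crossingsBelow a k (b 0) % 2 := by
  induction l with
  | zero => rfl
  | succ l ih =>
    rw [← ih (fun j hj => hb j (Nat.lt_succ_of_lt hj))
      (fun i hi j hj => hab i hi j (hj.trans l.le_succ))
      (fun j hj => hcols j (hj.trans l.le_succ))]
    exact crossingsBelow_mod_two_eq_of_sub_mem ha (hb l l.lt_succ_self)
      (fun i hi => hab i hi l l.le_succ) (fun i hi => hab i hi (l + 1) le_rfl)
      (hcols l l.le_succ) (hcols (l + 1) le_rfl)

/-- A discrete Jordan curve theorem: the parity of `crossingsBelow a k` is constant along `b`,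
but it is even at the bottom row and odd at the top row. -/
theorem exists_eq_of_isPath_crossing {a b : ℕ → Cell} {k l : ℕ} {x₀ x₁ y₀ y₁ : ℤ}
    (ha : IsPath vonNeumann a k) (hb : IsPath vonNeumann b l)
    (ha_ends : (a 0).1 = x₀ ∧ (a k).1 = x₁ ∨ (a 0).1 = x₁ ∧ (a k).1 = x₀)
    (ha_rows : ∀ i ≤ k, y₀ ≤ (a i).2 ∧ (a i).2 < y₁)
    (hb_ends : (b 0).2 = y₀ ∧ (b l).2 = y₁ ∨ (b 0).2 = y₁ ∧ (b l).2 = y₀)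
    (hb_cols : ∀ j ≤ l, x₀ < (b j).1 ∧ (b j).1 < x₁) :
    ∃ i ≤ k, ∃ j ≤ l, a i = b j := by
  by_contra! hab
  have hinv := crossingsBelow_mod_two_eq_of_isPath ha hb hab fun j hj => by
    have := hb_cols j hj
    omega
  have hbot (j : ℕ) (hj : (b j).2 = y₀) : crossingsBelow a k (b j) = 0 := by
    rw [← Prod.mk.eta (p := b j), hj]
    exact crossingsBelow_eq_zero (fun i hi => (ha_rows i hi).1) _
  have htop (j : ℕ) (hjl : j ≤ l) (hj : (b j).2 = y₁) : crossingsBelow a k (b j) % 2 = 1 := by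
    have := hb_cols j hjl
    rw [← Prod.mk.eta (p := b j), hj,
      crossingsBelow_mod_two_of_above ha fun i hi => (ha_rows i hi).2]
    split_ifs <;> omega
  rcases hb_ends with ⟨h₀, hl⟩ | ⟨h₀, hl⟩
  · have := htop l le_rfl hl
    rw [hinv, hbot 0 h₀] at this
    omega
  · have := htop 0 (Nat.zero_le l) h₀
    rw [← hinv, hbot l hl] at this
    omega

end Crossing

section Gate

variable {M N' : ℕ} {i j : Fin 4}

lemma opposite_sides_cases {iN iE iS iW : Fin 4}
    (hNS : ((iN : ℤ) - (iS : ℤ)).natAbs = 2) (hWE : ((iW : ℤ) - (iE : ℤ)).natAbs = 2)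
    (huniv : ({iN, iE, iS, iW} : Finset (Fin 4)) = univ) :
    (iN = 1 ∧ iS = 3 ∨ iN = 3 ∧ iS = 1) ∧ (iW = 0 ∧ iE = 2 ∨ iW = 2 ∧ iE = 0) ∨
      (iW = 1 ∧ iE = 3 ∨ iW = 3 ∧ iE = 1) ∧ (iN = 0 ∧ iS = 2 ∨ iN = 2 ∧ iS = 0) := by
  revert iN iE iS iW
  decide

lemma snd_of_mem_horizontal_sides (hij : i = 1 ∧ j = 3 ∨ i = 3 ∧ j = 1) {p q : Cell}
    (hp : p ∈ side M N' i) (hq : q ∈ side M N' j) :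
    p.2 = 0 ∧ q.2 = (N' : ℤ) - 1 ∨ p.2 = (N' : ℤ) - 1 ∧ q.2 = 0 := by
  rcases hij with ⟨rfl, rfl⟩ | ⟨rfl, rfl⟩ <;> simp [side] at hp hq <;> omega

lemma fst_of_mem_vertical_sides (hij : i = 0 ∧ j = 2 ∨ i = 2 ∧ j = 0) {p q : Cell}
    (hp : p ∈ side M N' i) (hq : q ∈ side M N' j) :
    p.1 = 0 ∧ q.1 = (M : ℤ) - 1 ∨ p.1 = (M : ℤ) - 1 ∧ q.1 = 0 := by
  rcases hij with ⟨rfl, rfl⟩ | ⟨rfl, rfl⟩ <;> simp [side] at hp hq <;> omega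

lemma snd_of_notMem_horizontal_sides (hij : i = 1 ∧ j = 3 ∨ i = 3 ∧ j = 1) {p : Cell}
    (hp : p ∈ Rect M N') (hpij : p ∉ side M N' i ∪ side M N' j) :
    0 < p.2 ∧ p.2 < (N' : ℤ) - 1 := by
  simp only [Rect, Set.mem_ofPred_eq] at hp
  rcases hij with ⟨rfl, rfl⟩ | ⟨rfl, rfl⟩ <;> simp [side] at hpij <;> omega

lemma fst_of_notMem_vertical_sides (hij : i = 0 ∧ j = 2 ∨ i = 2 ∧ j = 0) {p : Cell}
    (hp : p ∈ Rect M N') (hpij : p ∉ side M N' i ∪ side M N' j) :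
    0 < p.1 ∧ p.1 < (M : ℤ) - 1 := by
  simp only [Rect, Set.mem_ofPred_eq] at hp
  rcases hij with ⟨rfl, rfl⟩ | ⟨rfl, rfl⟩ <;> simp [side] at hpij <;> omega

end Gate

theorem false_of_crossing_signals {M N' T : ℕ} {g : Config} {a a' b b' : Cell} {i j k l : Fin 4}
    (hg : Stable vonNeumann g) (hgR : ∀ p, p ∉ Rect M N' → g p = 0)
    (haR : a ∈ Rect M N') (hbR : b ∈ Rect M N')
    (hij : i = 1 ∧ j = 3 ∨ i = 3 ∧ j = 1) (hkl : k = 0 ∧ l = 2 ∨ k = 2 ∧ l = 0)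
    (ha : a ∈ side M N' i) (ha' : a' ∈ side M N' j) (hb : b ∈ side M N' k)
    (hb' : b' ∈ side M N' l)
    (hA : θ vonNeumann ≤ (F vonNeumann)^[T] (g + one a) a')
    (hA_quiet : ∀ p ∈ side M N' k ∪ side M N' l, ∀ t ≤ T,
      (F vonNeumann)^[t] (g + one a) p < θ vonNeumann)
    (hB : θ vonNeumann ≤ (F vonNeumann)^[T] (g + one b) b')
    (hB_quiet : ∀ p ∈ side M N' i ∪ side M N' j, ∀ t ≤ T,
      (F vonNeumann)^[t] (g + one b) p < θ vonNeumann) : False := by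
  have hR (p : Cell) (hp : p ∉ Rect M N') := exists_sub_notMem_rect_of_notMem hp
  have hA_conf := mem_and_topplings_eq_zero_of_topples hR hg hgR haR
    (exists_sub_notMem_rect_of_mem_side ha)
  have hB_conf := mem_and_topplings_eq_zero_of_topples hR hg hgR hbR
    (exists_sub_notMem_rect_of_mem_side hb)
  have hA_once := topplesAtMostOnce_iff.2 fun t p hp => (hA_conf t p hp).2
  have hB_once := topplesAtMostOnce_iff.2 fun t p hp => (hB_conf t p hp).2
  have hle {c d : Cell} (z : Cell) (hz : z ≠ c) : (g + one c) z ≤ (g + one d) z := by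
    simp [one, hz]
  obtain ⟨kB, fB, hfB0, hfBk, hfB, hfB_cells⟩ :=
    (topples_le_or_exists_path_topplesBefore hle hB_once hB).resolve_left
      fun ⟨t, ht, htop⟩ => (hA_quiet b' (.inr hb') t ht).not_ge htop
  obtain ⟨kA, fA, hfA0, hfAk, hfA, hfA_cells⟩ :=
    (topples_le_or_exists_path_topplesBefore hle hA_once hA).resolve_left
      fun ⟨t, ht, htop⟩ => (hB_quiet a' (.inr ha') t ht).not_ge htop
  obtain ⟨m, hm, n, hn, hmn⟩ := exists_eq_of_isPath_crossing hfB hfA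
    (hfB0 ▸ hfBk ▸ fst_of_mem_vertical_sides hkl hb hb')
    (fun m hm => by
      obtain ⟨⟨u, hu, htop⟩, -⟩ := hfB_cells m hm
      have := snd_of_notMem_horizontal_sides hij (hB_conf u _ htop).1
        fun hp => (hB_quiet _ hp u hu).not_ge htop
      omega)
    (hfA0 ▸ hfAk ▸ snd_of_mem_horizontal_sides hij ha ha')
    (fun n hn => by
      obtain ⟨⟨u, hu, htop⟩, -⟩ := hfA_cells n hn
      exact fst_of_notMem_vertical_sides hkl (hA_conf u _ htop).1
        fun hp => (hA_quiet _ hp u hu).not_ge htop)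
  obtain ⟨⟨u, -, hu⟩, hBA⟩ := hfB_cells m hm
  obtain ⟨⟨t, -, ht⟩, hAB⟩ := hfA_cells n hn
  rw [hmn] at hu hBA
  exact lt_asymm (hBA u t hu ht) (hAB t u ht hu)

theorem vonNeumann_no_timed_crossover :
    ∀ M N' T : ℕ, 0 < M → 0 < N' → 0 < T →
      ¬ ∃ g n e s w, IsTimedCrossoverGate
        ({(0,1),(1,0),(0,-1),(-1,0)} : Finset Cell) M N' T g n e s w := by
  rintro M N' T - - - ⟨g, n, e, s, w, hg, hgR, hnR, -, -, hwR, -, -, -, -, iN, iE, iS, iW,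
    hn, he, hs, hw, hNS, hWE, huniv, hns, hn_quiet, hwe, hw_quiet⟩
  rcases opposite_sides_cases hNS hWE huniv with ⟨hNS', hWE'⟩ | ⟨hWE', hNS'⟩
  · exact false_of_crossing_signals hg hgR hnR hwR hNS' hWE' hn hs hw he hns hn_quiet hwe
      hw_quiet
  · exact false_of_crossing_signals hg hgR hwR hnR hWE' hNS' hw he hn hs hwe hw_quiet hns
      hn_quiet

end Sandpile
end

section
/- The neighborhood N = {(0,1), (1,0)} (neighborhood 192 in the 8-bit numbering of subsets of the Moore neighborhood) does not admit a timed crossover gate: for all sizes M, N' ∈ ℕ⁺ and all delays T ∈ ℕ⁺, no timed crossover gate of size M × N' and delay T exists for this sandpile model. -/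
namespace Sandpile

/-!
For this neighbourhood `θ = 2`, so a stable configuration has at most one grain per cell, and a
grain dropped at `x₀` starts an avalanche that advances one anti-diagonal per step: every cell
topples at most once, at time `level x₀ p`; a loaded cell topples as soon as its lower or its left
neighbour has, an empty one only when both have. Signals therefore travel up and to the right only,
so in a crossover one signal runs from the left side to the right side and the other from the
bottom to the top. The cells toppled by the horizontal signal contain a monotone staircase from its
input to its output, and every cell on or above that staircase (up to the anti-diagonal of the
output) toppled by the vertical avalanche is toppled by the horizontal one as well. Hence whichever
output lies on the earlier anti-diagonal is reached by the wrong signal within time `T`.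
-/

theorem F_eq_self_of_stable {𝒩 : Finset Cell} {c : Config} (hc : Stable 𝒩 c) : F 𝒩 c = c := by
  funext p
  simp [F, fun q => not_le.mpr (hc q)]

theorem iterate_F_eq_self_of_stable {𝒩 : Finset Cell} {c : Config} (hc : Stable 𝒩 c) (t : ℕ) :
    (F 𝒩)^[t] c = c :=
  Function.iterate_fixed (F_eq_self_of_stable hc) t

namespace Nbhd192

def nbhd : Finset Cell := {(0, 1), (1, 0)}

theorem θ_nbhd : θ nbhd = 2 := rfl

theorem F_nbhd_apply (c : Config) (p : Cell) :
    F nbhd c p = c p - 2 * (if 2 ≤ c p then 1 else 0)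
      + ((if 2 ≤ c (p - (0, 1)) then 1 else 0) + (if 2 ≤ c (p - (1, 0)) then 1 else 0)) := by
  rw [F, θ_nbhd, nbhd, Finset.sum_pair (by decide)]

def level (x₀ p : Cell) : ℤ := p.1 + p.2 - x₀.1 - x₀.2

@[simp]
theorem level_self (x₀ : Cell) : level x₀ x₀ = 0 := by
  simp [level]

@[simp]
theorem level_sub_zero_one (x₀ p : Cell) : level x₀ (p - (0, 1)) = level x₀ p - 1 := by
  simp only [level, Prod.fst_sub, Prod.snd_sub]; ring

@[simp]
theorem level_sub_one_zero (x₀ p : Cell) : level x₀ (p - (1, 0)) = level x₀ p - 1 := by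
  simp only [level, Prod.fst_sub, Prod.snd_sub]; ring

/-- `firing g x₀ t p` is `1` if `p` topples at time `t` after a grain is dropped at `x₀` on `g`,
and `0` otherwise (see `two_le_iterate_iff`); the avalanche advances by one anti-diagonal per step,
so `p` can only topple at time `level x₀ p`. -/
def firing (g : Config) (x₀ : Cell) : ℕ → Cell → ℕ
  | 0, p => if p = x₀ then 1 else 0
  | t + 1, p => if level x₀ p = t + 1 ∧
      2 ≤ g p + firing g x₀ t (p - (0, 1)) + firing g x₀ t (p - (1, 0)) then 1 else 0

section Firing

variable {g : Config} {x₀ p : Cell} {t : ℕ}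

theorem firing_zero_eq_one_iff : firing g x₀ 0 p = 1 ↔ p = x₀ := by
  rw [firing]; split_ifs <;> simp_all

theorem firing_succ_eq_one_iff : firing g x₀ (t + 1) p = 1 ↔ level x₀ p = t + 1 ∧
    2 ≤ g p + firing g x₀ t (p - (0, 1)) + firing g x₀ t (p - (1, 0)) := by
  rw [firing]; split_ifs <;> simp_all

theorem firing_le_one : firing g x₀ t p ≤ 1 := by
  cases t <;> rw [firing] <;> split_ifs <;> simp

theorem level_eq_of_firing (h : firing g x₀ t p = 1) : level x₀ p = t := by
  cases t with
  | zero => rw [firing_zero_eq_one_iff.1 h, level_self, Nat.cast_zero]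
  | succ t => exact_mod_cast (firing_succ_eq_one_iff.1 h).1

theorem firing_eq_zero_of_level_ne (h : level x₀ p ≠ t) : firing g x₀ t p = 0 := by
  have := @firing_le_one g x₀ p t
  have := mt (@level_eq_of_firing g x₀ p t) h
  omega

theorem firing_parent (hg : ∀ q, g q ≤ 1) (h : firing g x₀ (t + 1) p = 1) :
    firing g x₀ t (p - (0, 1)) = 1 ∨ firing g x₀ t (p - (1, 0)) = 1 := by
  have := (firing_succ_eq_one_iff.1 h).2
  have := hg p
  have := @firing_le_one g x₀ (p - (0, 1)) t
  have := @firing_le_one g x₀ (p - (1, 0)) t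
  omega

theorem le_of_firing (hg : ∀ q, g q ≤ 1) (h : firing g x₀ t p = 1) : x₀ ≤ p := by
  induction t generalizing p with
  | zero => exact (firing_zero_eq_one_iff.1 h).ge
  | succ t ih =>
    rcases firing_parent hg h with h' | h' <;> refine (ih h').trans ?_ <;>
      simp [Prod.le_def]

theorem firing_swap (g : Config) (x₀ : Cell) (t : ℕ) (p : Cell) :
    firing (g ∘ Prod.swap) x₀.swap t p.swap = firing g x₀ t p := by
  induction t generalizing p with
  | zero => simp [firing]
  | succ t ih =>
    have h₁ : p.swap - (0, 1) = (p - (1, 0)).swap := by simp [Prod.swap]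
    have h₂ : p.swap - (1, 0) = (p - (0, 1)).swap := by simp [Prod.swap]
    have h₃ : level x₀.swap p.swap = level x₀ p := by
      simp only [level, Prod.fst_swap, Prod.snd_swap]; ring
    simp only [firing, h₁, h₂, h₃, ih, Function.comp_apply, Prod.swap_swap, add_right_comm (g p)]

end Firing

section Dynamics

variable {g : Config} {x₀ : Cell}

def IsAvalancheAt (g : Config) (x₀ : Cell) (t : ℕ) (c : Config) : Prop :=
  ∀ p, (level x₀ p < t → c p ≤ 1) ∧
    (level x₀ p = t → (if 2 ≤ c p then 1 else 0) = firing g x₀ t p ∧ c p ≤ 3) ∧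
    (t < level x₀ p → c p = g p)

theorem isAvalancheAt_zero (hg : ∀ q, g q ≤ 1) (hx : g x₀ = 1) :
    IsAvalancheAt g x₀ 0 (g + one x₀) := by
  intro p
  have := hg p
  by_cases hp : p = x₀
  · subst hp; simp [one, firing, hx]
  · simp only [Pi.add_apply, one, firing, if_neg hp]
    refine ⟨fun _ => by omega, fun _ => ⟨by simp; omega, by omega⟩, fun _ => rfl⟩

theorem IsAvalancheAt.F_nbhd (hg : ∀ q, g q ≤ 1) {t : ℕ} {c : Config}
    (hc : IsAvalancheAt g x₀ t c) : IsAvalancheAt g x₀ (t + 1) (F nbhd c) := by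
  intro p
  obtain ⟨hp₁, hp₂, hp₃⟩ := hc p
  obtain ⟨hd₁, hd₂, hd₃⟩ := hc (p - (0, 1))
  obtain ⟨hl₁, hl₂, hl₃⟩ := hc (p - (1, 0))
  simp only [level_sub_zero_one, level_sub_one_zero] at hd₁ hd₂ hd₃ hl₁ hl₂ hl₃
  rw [F_nbhd_apply]
  push_cast
  rcases lt_trichotomy (level x₀ p) (t + 1) with hlt | heq | hgt
  · have hd : ¬ 2 ≤ c (p - (0, 1)) := by have := hd₁ (by omega); omega
    have hl : ¬ 2 ≤ c (p - (1, 0)) := by have := hl₁ (by omega); omega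
    refine ⟨fun _ => ?_, by omega, by omega⟩
    rcases lt_or_eq_of_le (Int.lt_add_one_iff.1 hlt) with hlt' | heq'
    · have := hp₁ hlt'; simp [hd, hl]; omega
    · have := (hp₂ heq').2; split_ifs <;> omega
  · rw [hp₃ (by omega), (hd₂ (by omega)).1, (hl₂ (by omega)).1]
    have := hg p
    have := @firing_le_one g x₀ (p - (0, 1)) t
    have := @firing_le_one g x₀ (p - (1, 0)) t
    refine ⟨by omega, fun _ => ⟨?_, by simp; omega⟩, by omega⟩
    simp only [show ¬ 2 ≤ g p by omega, if_false, mul_zero, Nat.sub_zero, firing, heq, true_and,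
      add_assoc]
  · rw [hp₃ (by omega), hd₃ (by omega), hl₃ (by omega)]
    have := hg p
    have := hg (p - (0, 1))
    have := hg (p - (1, 0))
    refine ⟨by omega, by omega, fun _ => ?_⟩
    simp [show ¬ 2 ≤ g p by omega, show ¬ 2 ≤ g (p - (0, 1)) by omega,
      show ¬ 2 ≤ g (p - (1, 0)) by omega]

theorem isAvalancheAt_iterate (hg : ∀ q, g q ≤ 1) (hx : g x₀ = 1) (t : ℕ) :
    IsAvalancheAt g x₀ t ((F nbhd)^[t] (g + one x₀)) := by
  induction t with
  | zero => exact isAvalancheAt_zero hg hx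
  | succ t ih => rw [Function.iterate_succ_apply']; exact ih.F_nbhd hg

theorem two_le_iterate_iff (hg : ∀ q, g q ≤ 1) (hx : g x₀ = 1) (t : ℕ) (p : Cell) :
    2 ≤ (F nbhd)^[t] (g + one x₀) p ↔ firing g x₀ t p = 1 := by
  obtain ⟨hlt, heq, hgt⟩ := isAvalancheAt_iterate hg hx t p
  rcases lt_trichotomy (level x₀ p) t with h | h | h
  · have := hlt h
    simp [firing_eq_zero_of_level_ne h.ne]; omega
  · rw [← (heq h).1]; split_ifs <;> simp_all
  · have := hg p
    simp [hgt h, firing_eq_zero_of_level_ne h.ne']; omega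

theorem seed_eq_one (hg : ∀ q, g q ≤ 1) {t : ℕ} {p : Cell}
    (h : 2 ≤ (F nbhd)^[t] (g + one x₀) p) : g x₀ = 1 := by
  by_contra hx
  have hstable : Stable nbhd (g + one x₀) := by
    intro q
    have := hg q
    have := hg x₀
    by_cases hq : q = x₀ <;> simp [one, hq, θ_nbhd] <;> omega
  rw [iterate_F_eq_self_of_stable hstable] at h
  have := hstable p
  rw [θ_nbhd] at this
  omega

end Dynamics

section Crossing

variable {g : Config}

def Fires (g : Config) (x₀ p : Cell) : Prop := ∃ t, firing g x₀ t p = 1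

theorem firing_eq_one_of_fires {x₀ p : Cell} {t : ℕ} (h : Fires g x₀ p) (ht : level x₀ p = t) :
    firing g x₀ t p = 1 := by
  obtain ⟨t', h'⟩ := h
  obtain rfl : t' = t := by have := level_eq_of_firing h'; omega
  exact h'

/-- The cells toppled by the avalanche from `n` contain a monotone staircase from `n` to `s`:
`lo x` is the height at which it enters column `x`, and `lo (x + 1)` the height at which it
leaves it. -/
theorem exists_staircase (hg : ∀ q, g q ≤ 1) {n s : Cell} {t : ℕ} (h : firing g n t s = 1) :
    ∃ lo : ℤ → ℤ, Monotone lo ∧ (∀ x, n.2 ≤ lo x) ∧ (∀ x, s.1 < x → lo x = s.2) ∧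
      ∀ x y, n.1 ≤ x → x ≤ s.1 → lo x ≤ y → y ≤ lo (x + 1) → Fires g n (x, y) := by
  induction t generalizing s with
  | zero =>
    obtain rfl := firing_zero_eq_one_iff.1 h
    refine ⟨fun _ => s.2, monotone_const, fun _ => le_rfl, fun _ _ => rfl,
      fun x y hx₁ hx₂ hy₁ hy₂ => ?_⟩
    obtain rfl : (x, y) = s := Prod.ext (by omega) (by dsimp only at hy₁ hy₂; omega)
    exact ⟨0, by simp [firing]⟩
  | succ t ih =>
    have hns := le_of_firing hg h
    rw [Prod.le_def] at hns
    rcases firing_parent hg h with hp | hp <;>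
    · obtain ⟨lo, hmono, hge, hright, hstair⟩ := ih hp
      simp only [Prod.fst_sub, Prod.snd_sub, sub_zero] at hright hstair
      refine ⟨fun x => if x ≤ s.1 then lo x else s.2, fun a b hab => ?_, fun x => ?_,
        fun x hx => if_neg (by omega), fun x y hx₁ hx₂ hy₁ hy₂ => ?_⟩ <;> dsimp only at *
      · have := hmono hab
        have := hmono (le_max_left b (s.1 + 1))
        have := hright (max b (s.1 + 1)) (by omega)
        split_ifs <;> omega
      · have := hge x; split_ifs <;> omega
      · rw [if_pos hx₂] at hy₁
        by_cases hx : x + 1 ≤ s.1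
        · rw [if_pos hx] at hy₂
          exact hstair x y hx₁ (by omega) hy₁ hy₂
        · rw [if_neg hx] at hy₂
          obtain rfl : x = s.1 := by omega
          by_cases hy : y = s.2
          · subst hy; exact ⟨t + 1, h⟩
          -- if `s` was entered from the left, then `lo s.1 = s.2 > y`
          · first
              | exact hstair s.1 y hx₁ le_rfl hy₁ (by rw [hright (s.1 + 1) (by omega)]; omega)
              | have := hright s.1 (by omega); omega

/-- Both parents of a cell lie on one anti-diagonal, hence topple from `n` at the same time: this
is what lets the induction along the avalanche from `w` go through. -/
theorem fires_of_fires_of_mem (hg : ∀ q, g q ≤ 1) {n w q : Cell} {U : Set Cell} (hwU : w ∉ U)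
    (hU : ∀ q ∈ U, Fires g n q ∨ ((Fires g w (q - (0, 1)) → q - (0, 1) ∈ U) ∧
      (Fires g w (q - (1, 0)) → q - (1, 0) ∈ U)))
    (hq : q ∈ U) (hwq : Fires g w q) : Fires g n q := by
  obtain ⟨δ, hδ⟩ := hwq
  induction δ generalizing q with
  | zero => exact absurd (firing_zero_eq_one_iff.1 hδ ▸ hq) hwU
  | succ δ ih =>
    rcases hU q hq with hn | ⟨hd, hl⟩
    · exact hn
    obtain ⟨γ, hγ⟩ : ∃ γ : ℕ, level n q = γ + 1 := by
      rcases firing_parent hg hδ with hp | hp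
      · obtain ⟨γ, hγ⟩ := ih (hd ⟨δ, hp⟩) hp
        exact ⟨γ, by have := level_eq_of_firing hγ; simp at this; omega⟩
      · obtain ⟨γ, hγ⟩ := ih (hl ⟨δ, hp⟩) hp
        exact ⟨γ, by have := level_eq_of_firing hγ; simp at this; omega⟩
    have hd' : firing g w δ (q - (0, 1)) ≤ firing g n γ (q - (0, 1)) := by
      by_cases hp : firing g w δ (q - (0, 1)) = 1
      · rw [hp, firing_eq_one_of_fires (ih (hd ⟨δ, hp⟩) hp) (by simp; omega)]
      · have := @firing_le_one g w (q - (0, 1)) δ; omega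
    have hl' : firing g w δ (q - (1, 0)) ≤ firing g n γ (q - (1, 0)) := by
      by_cases hp : firing g w δ (q - (1, 0)) = 1
      · rw [hp, firing_eq_one_of_fires (ih (hl ⟨δ, hp⟩) hp) (by simp; omega)]
      · have := @firing_le_one g w (q - (1, 0)) δ; omega
    have := (firing_succ_eq_one_iff.1 hδ).2
    exact ⟨γ + 1, firing_succ_eq_one_iff.2 ⟨hγ, by omega⟩⟩

theorem firing_of_crosses_staircase (hg : ∀ q, g q ≤ 1) {n s w e : Cell} {T : ℕ}
    (hs : firing g n T s = 1) (he : Fires g w e) (hnw : n.1 ≤ w.1) (hwn : w.2 < n.2)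
    (hse : s.2 < e.2) (hes : e.1 + e.2 ≤ s.1 + s.2) :
    ∃ γ ≤ T, firing g n γ e = 1 := by
  obtain ⟨lo, hmono, hge, hright, hstair⟩ := exists_staircase hg hs
  have hle : ∀ x, lo x ≤ s.2 := fun x =>
    (hmono (le_max_left x (s.1 + 1))).trans_eq (hright _ (by omega))
  have hw_le : ∀ {q}, Fires g w q → w.1 ≤ q.1 := fun ⟨_, h⟩ => (le_of_firing hg h).1
  have hen : Fires g n e := by
    refine fires_of_fires_of_mem hg
      (U := {q | n.1 ≤ q.1 ∧ lo q.1 ≤ q.2 ∧ q.1 + q.2 ≤ s.1 + s.2})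
      (fun ⟨_, hw, _⟩ => by have := hge w.1; omega) (fun q ⟨hq₁, hq₂, hq₃⟩ => ?_)
      ⟨by have := hw_le he; omega, by have := hle e.1; omega, hes⟩ he
    by_cases hon : q.2 ≤ lo (q.1 + 1)
    · left
      refine hstair q.1 q.2 hq₁ ?_ hq₂ hon
      by_contra hq
      have := hright q.1 (by omega)
      omega
    · have := hmono (show q.1 - 1 ≤ q.1 by omega)
      have := hmono (show q.1 ≤ q.1 + 1 by omega)
      refine Or.inr ⟨fun _ => ⟨?_, ?_, ?_⟩, fun hf => ⟨?_, ?_, ?_⟩⟩ <;>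
        simp only [Prod.fst_sub, Prod.snd_sub, sub_zero] at * <;> try omega
      have := hw_le hf
      simp only [Prod.fst_sub] at this
      omega
  obtain ⟨γ, hγ⟩ := hen
  refine ⟨γ, ?_, hγ⟩
  have := level_eq_of_firing hγ
  have := level_eq_of_firing hs
  simp only [level] at *
  omega

/-- The monotone path from `n` to `s` separates `w` from `e`, and the one from `w` to `e`
separates `n` from `s`. -/
def Crosses (n s w e : Cell) : Prop := n.1 < w.1 ∧ w.2 < n.2 ∧ e.1 < s.1 ∧ s.2 < e.2

theorem firing_of_crosses (hg : ∀ q, g q ≤ 1) {n s w e : Cell} {T : ℕ}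
    (hs : firing g n T s = 1) (he : firing g w T e = 1) (hx : Crosses n s w e) :
    (∃ γ ≤ T, firing g n γ e = 1) ∨ ∃ γ ≤ T, firing g w γ s = 1 := by
  obtain ⟨h₁, h₂, h₃, h₄⟩ := hx
  rcases le_total (e.1 + e.2) (s.1 + s.2) with hes | hse
  · exact Or.inl (firing_of_crosses_staircase hg hs ⟨T, he⟩ h₁.le h₂ h₄ hes)
  · right
    rw [← firing_swap] at hs he
    simp only [← firing_swap g w _ s]
    exact firing_of_crosses_staircase (fun q => hg q.swap) he ⟨T, hs⟩ h₂.le h₁ h₃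
      (by simp only [Prod.fst_swap, Prod.snd_swap]; omega)

end Crossing

theorem opposite_sides_cases : ∀ iN iE iS iW : Fin 4,
    ((iN : ℤ) - (iS : ℤ)).natAbs = 2 → ((iW : ℤ) - (iE : ℤ)).natAbs = 2 →
    ({iN, iE, iS, iW} : Finset (Fin 4)) = Finset.univ →
    (iN = 0 ∧ iS = 2 ∨ iN = 2 ∧ iS = 0) ∧ (iW = 1 ∧ iE = 3 ∨ iW = 3 ∧ iE = 1) ∨
    (iN = 1 ∧ iS = 3 ∨ iN = 3 ∧ iS = 1) ∧ (iW = 0 ∧ iE = 2 ∨ iW = 2 ∧ iE = 0) := by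
  decide

theorem lt_of_mem_side_of_not_mem_corners {M N' : ℕ} {p : Cell} {i : Fin 4}
    (hp : p ∈ side M N' i) (hc : p ∉ Corners M N') :
    (i = 0 ∨ i = 2 → 0 < p.2 ∧ p.2 < N' - 1) ∧ (i = 1 ∨ i = 3 → 0 < p.1 ∧ p.1 < M - 1) := by
  simp only [Corners, Set.mem_insert_iff, Set.mem_singleton_iff, not_or, Prod.ext_iff]
    at hc
  fin_cases i <;> simp [side] at hp ⊢ <;> omega

theorem crosses_of_sides {M N' : ℕ} {n e s w : Cell} {iN iE iS iW : Fin 4}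
    (hn : n ∈ side M N' iN) (he : e ∈ side M N' iE) (hs : s ∈ side M N' iS)
    (hw : w ∈ side M N' iW) (hnc : n ∉ Corners M N') (hec : e ∉ Corners M N')
    (hsc : s ∉ Corners M N') (hwc : w ∉ Corners M N')
    (hNS : ((iN : ℤ) - (iS : ℤ)).natAbs = 2) (hWE : ((iW : ℤ) - (iE : ℤ)).natAbs = 2)
    (huniv : ({iN, iE, iS, iW} : Finset (Fin 4)) = Finset.univ) (hns : n ≤ s) (hwe : w ≤ e) :
    Crosses n s w e ∨ Crosses w e n s := by
  have hn' := lt_of_mem_side_of_not_mem_corners hn hnc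
  have he' := lt_of_mem_side_of_not_mem_corners he hec
  have hs' := lt_of_mem_side_of_not_mem_corners hs hsc
  have hw' := lt_of_mem_side_of_not_mem_corners hw hwc
  rw [Prod.le_def] at hns hwe
  unfold Crosses
  rcases opposite_sides_cases _ _ _ _ hNS hWE huniv with
    ⟨⟨rfl, rfl⟩ | ⟨rfl, rfl⟩, ⟨rfl, rfl⟩ | ⟨rfl, rfl⟩⟩ |
      ⟨⟨rfl, rfl⟩ | ⟨rfl, rfl⟩, ⟨rfl, rfl⟩ | ⟨rfl, rfl⟩⟩ <;>
    simp [side] at hn he hs hw hn' he' hs' hw' <;> omega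

end Nbhd192

open Nbhd192 in
theorem nbhd192_no_timed_crossover :
    ∀ M N' T : ℕ, 0 < M → 0 < N' → 0 < T →
      ¬ ∃ g n e s w, IsTimedCrossoverGate
        ({(0,1),(1,0)} : Finset Cell) M N' T g n e s w := by
  intro M N' T _ _ _
  change ¬ ∃ g n e s w, IsTimedCrossoverGate nbhd M N' T g n e s w
  rintro ⟨g, n, e, s, w, hst, -, -, -, -, -, hnc, hec, hsc, hwc,
    iN, iE, iS, iW, hn, he, hs, hw, hNS, hWE, huniv, hns, hcoldN, hwe, hcoldW⟩
  simp only [Stable, θ_nbhd] at hst hns hwe hcoldN hcoldW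
  have hg : ∀ q, g q ≤ 1 := fun q => Nat.le_of_lt_succ (hst q)
  have hsT := (two_le_iterate_iff hg (seed_eq_one hg hns) T s).1 hns
  have heT := (two_le_iterate_iff hg (seed_eq_one hg hwe) T e).1 hwe
  have hcoldN' : ∀ γ ≤ T, firing g n γ e ≠ 1 := fun γ hγ h =>
    (hcoldN e (Or.inr he) γ hγ).not_ge ((two_le_iterate_iff hg (seed_eq_one hg hns) γ e).2 h)
  have hcoldW' : ∀ γ ≤ T, firing g w γ s ≠ 1 := fun γ hγ h =>
    (hcoldW s (Or.inr hs) γ hγ).not_ge ((two_le_iterate_iff hg (seed_eq_one hg hwe) γ s).2 h)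
  rcases crosses_of_sides hn he hs hw hnc hec hsc hwc hNS hWE huniv (le_of_firing hg hsT)
    (le_of_firing hg heT) with hx | hx
  · rcases firing_of_crosses hg hsT heT hx with ⟨γ, hγ, h⟩ | ⟨γ, hγ, h⟩
    exacts [hcoldN' γ hγ h, hcoldW' γ hγ h]
  · rcases firing_of_crosses hg heT hsT hx with ⟨γ, hγ, h⟩ | ⟨γ, hγ, h⟩
    exacts [hcoldW' γ hγ h, hcoldN' γ hγ h]

end Sandpile
end

section
/- The neighborhood N = {(1,0), (1,−1)} (neighborhood 66 in the 8-bit numbering of subsets of the Moore neighborhood) does not admit a timed crossover gate: for all sizes M, N' ∈ ℕ⁺ and all delays T ∈ ℕ⁺, no timed crossover gate of size M × N' and delay T exists for this sandpile model. -/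
namespace Sandpile

/-! Every vector of the neighborhood `{(1,0),(1,-1)}` points one column to the right, so after a
grain is added to a stable configuration at `a`, the cells that can topple at time `t` all lie in
column `a.1 + t`. Hence both signals of a timed crossover gate travel exactly `T` columns to the
right. The signal entering through a vertical side crosses the whole rectangle, a horizontal
distance of `M - 1`, while the one entering through a horizontal side starts and ends at
non-corner cells, which are strictly less than `M - 1` columns apart. -/

section Dynamics

variable {𝒩 : Finset Cell}

lemma sum_topplingNeighbors_le (c : Config) (p : Cell) :
    ∑ p' ∈ 𝒩, (if θ 𝒩 ≤ c (p - p') then 1 else 0) ≤ θ 𝒩 :=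
  calc _ ≤ ∑ _p' ∈ 𝒩, 1 := Finset.sum_le_sum fun _ _ => by split_ifs <;> omega
    _ = θ 𝒩 := by simp [θ]

lemma F_apply_lt_two_mul {c : Config} {p : Cell} (hp : c p < 2 * θ 𝒩) :
    F 𝒩 c p < 2 * θ 𝒩 := by
  have := sum_topplingNeighbors_le (𝒩 := 𝒩) c p
  unfold F
  split_ifs <;> omega

lemma F_apply_lt_of_forall_lt {c : Config} {p : Cell} (hp : c p < 2 * θ 𝒩)
    (hin : ∀ p' ∈ 𝒩, c (p - p') < θ 𝒩) : F 𝒩 c p < θ 𝒩 := by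
  have hzero : ∑ p' ∈ 𝒩, (if θ 𝒩 ≤ c (p - p') then 1 else 0) = 0 :=
    Finset.sum_eq_zero fun p' hp' => if_neg (hin p' hp').not_ge
  unfold F
  rw [hzero]
  split_ifs <;> omega

/-- The bound `2 * θ` makes every toppling cell stable again after it topples. -/
def ColumnFront (𝒩 : Finset Cell) (c : Config) (x : ℤ) : Prop :=
  (∀ p, c p < 2 * θ 𝒩) ∧ ∀ p, θ 𝒩 ≤ c p → p.1 = x

lemma ColumnFront.F (h𝒩 : ∀ p' ∈ 𝒩, p'.1 = 1) {c : Config} {x : ℤ}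
    (hc : ColumnFront 𝒩 c x) : ColumnFront 𝒩 (F 𝒩 c) (x + 1) := by
  refine ⟨fun p => F_apply_lt_two_mul (hc.1 p), fun p hp => ?_⟩
  by_contra hpx
  refine hp.not_gt (F_apply_lt_of_forall_lt (hc.1 p) fun p' hp' => ?_)
  by_contra hle
  have := hc.2 _ (not_lt.mp hle)
  simp only [Prod.fst_sub, h𝒩 p' hp'] at this
  omega

lemma columnFront_add_one {g : Config} (hg : Stable 𝒩 g) (a : Cell) :
    ColumnFront 𝒩 (g + one a) a.1 := by
  refine ⟨fun p => ?_, fun p hp => ?_⟩ <;> have := hg p <;> by_cases hpa : p = a <;>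
    simp_all [one] <;> omega

lemma columnFront_iterate (h𝒩 : ∀ p' ∈ 𝒩, p'.1 = 1) {g : Config} (hg : Stable 𝒩 g)
    (a : Cell) (t : ℕ) : ColumnFront 𝒩 ((F 𝒩)^[t] (g + one a)) (a.1 + t) := by
  induction t with
  | zero => simpa using columnFront_add_one hg a
  | succ t ih =>
    rw [Function.iterate_succ_apply', Nat.cast_succ, ← add_assoc]
    exact ih.F h𝒩

end Dynamics

section Geometry

variable {M N' : ℕ} {i j : Fin 4} {p q : Cell}

lemma fst_sub_fst_of_mem_vertical_sides (hi : i.val % 2 = 0) (hij : ((i : ℤ) - j).natAbs = 2)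
    (hp : p ∈ side M N' i) (hq : q ∈ side M N' j) :
    q.1 - p.1 = M - 1 ∨ q.1 - p.1 = 1 - M := by
  fin_cases i <;> fin_cases j <;> simp_all [side]

lemma abs_fst_sub_fst_lt_of_mem_horizontal_sides (hi : i.val % 2 = 1)
    (hij : ((i : ℤ) - j).natAbs = 2) (hp : p ∈ side M N' i) (hq : q ∈ side M N' j)
    (hpC : p ∉ Corners M N') (hqC : q ∉ Corners M N') : |q.1 - p.1| < M - 1 := by
  rw [abs_lt]
  obtain ⟨p1, p2⟩ := p
  obtain ⟨q1, q2⟩ := q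
  fin_cases i <;> fin_cases j <;> simp_all [side, Corners] <;> omega

lemma val_mod_two_ne_of_cover {iN iE iS iW : Fin 4} (hNS : ((iN : ℤ) - iS).natAbs = 2)
    (hWE : ((iW : ℤ) - iE).natAbs = 2) (huniv : ({iN, iE, iS, iW} : Finset (Fin 4)) = .univ) :
    iN.val % 2 ≠ iW.val % 2 := by
  -- the side following `iN` has the other parity, so it is `iE` or `iW`
  have : (⟨(iN.val + 1) % 4, Nat.mod_lt _ (by norm_num)⟩ : Fin 4) ∈
      ({iN, iE, iS, iW} : Finset _) := huniv ▸ Finset.mem_univ _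
  simp only [Finset.mem_insert, Finset.mem_singleton, Fin.ext_iff] at this
  omega

end Geometry

theorem nbhd66_no_timed_crossover :
    ∀ M N' T : ℕ, 0 < M → 0 < N' → 0 < T →
      ¬ ∃ g n e s w, IsTimedCrossoverGate
        ({(1,0),(1,-1)} : Finset Cell) M N' T g n e s w := by
  rintro M N' T - - - ⟨g, n, e, s, w, hg, -, -, -, -, -, hnC, heC, hsC, hwC,
    iN, iE, iS, iW, hn, he, hs, hw, hNS, hWE, huniv, hns, -, hwe, -⟩
  have hright : ∀ p' ∈ ({(1,0),(1,-1)} : Finset Cell), p'.1 = 1 := by simp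
  have hs1 : s.1 = n.1 + T := (columnFront_iterate hright hg n T).2 s hns
  have he1 : e.1 = w.1 + T := (columnFront_iterate hright hg w T).2 e hwe
  have hparity := val_mod_two_ne_of_cover hNS hWE huniv
  rcases Nat.mod_two_eq_zero_or_one iN.val with hN | hN
  · have hcross := fst_sub_fst_of_mem_vertical_sides hN hNS hn hs
    have hshort := abs_lt.mp
      (abs_fst_sub_fst_lt_of_mem_horizontal_sides (by omega) hWE hw he hwC heC)
    omega
  · have hcross := fst_sub_fst_of_mem_vertical_sides (by omega) hWE hw he
    have hshort := abs_lt.mp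
      (abs_fst_sub_fst_lt_of_mem_horizontal_sides hN hNS hn hs hnC hsC)
    omega

end Sandpile
end

section
/- The neighborhood N = {(1,0), (0,−1), (−1,1), (1,1), (1,−1), (−1,−1)} (neighborhood 111 in the 8-bit numbering of subsets of the Moore neighborhood) admits a timed crossover gate of size 10 × 10 and delay 12. -/
namespace Sandpile

/-! The gate is an explicit 10 × 10 configuration, so every condition is a finite check. As long
as no cell that reaches the threshold has a neighbour outside a window, the dynamics never leaves
that window; for the 12 × 12 window around the rectangle this holds at each of the twelve steps, so
the orbits are computed exactly by a step function on tables, which the kernel evaluates. -/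

section Window

variable {o : Cell} {w h : ℕ}

def window (o : Cell) (w h : ℕ) : Set Cell :=
  {p | o.1 ≤ p.1 ∧ p.1 < o.1 + w ∧ o.2 ≤ p.2 ∧ p.2 < o.2 + h}

instance (o : Cell) (w h : ℕ) : DecidablePred (· ∈ window o w h) := fun _ => by
  unfold window; infer_instance

theorem forall_mem_window {P : Cell → Prop} :
    (∀ p ∈ window o w h, P p) ↔ ∀ i < w, ∀ j < h, P (o.1 + i, o.2 + j) := by
  constructor
  · intro hP i hi j hj
    exact hP _ ⟨by simp, by simp [hi], by simp, by simp [hj]⟩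
  · rintro hP ⟨x, y⟩ ⟨hx₀, hx₁, hy₀, hy₁⟩
    have := hP (x - o.1).toNat (by omega) (y - o.2).toNat (by omega)
    rwa [Int.toNat_of_nonneg (by omega), Int.toNat_of_nonneg (by omega), add_sub_cancel,
      add_sub_cancel] at this

def ofRows (o : Cell) (L : List (List ℕ)) : Config := fun p =>
  if o.1 ≤ p.1 ∧ o.2 ≤ p.2 then (L.getD (p.2 - o.2).toNat []).getD (p.1 - o.1).toNat 0 else 0

theorem ofRows_eq_zero_of_not_mem {L : List (List ℕ)} (hh : L.length ≤ h)
    (hw : ∀ r ∈ L, r.length ≤ w) {p : Cell} (hp : p ∉ window o w h) : ofRows o L p = 0 := by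
  unfold ofRows
  split_ifs with hop
  swap; · rfl
  simp only [window, Set.mem_ofPred_eq, not_and, not_lt] at hp
  by_cases hy : (p.2 - o.2).toNat < L.length
  · rw [List.getD_eq_getElem _ _ hy]
    have := hw _ (List.getElem_mem hy)
    exact List.getD_eq_default _ _ (by omega)
  · rw [List.getD_eq_default L [] (by omega), List.getD_nil]

def tabulate (o : Cell) (w h : ℕ) (c : Config) : List (List ℕ) :=
  (List.range h).map fun j : ℕ => (List.range w).map fun i : ℕ => c (o.1 + i, o.2 + j)

theorem ofRows_tabulate_of_mem {c : Config} {p : Cell} (hp : p ∈ window o w h) :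
    ofRows o (tabulate o w h c) p = c p := by
  obtain ⟨x, y⟩ := p
  obtain ⟨hx₀, hx₁, hy₀, hy₁⟩ := hp
  simp only at hx₀ hx₁ hy₀ hy₁
  have hi : (x - o.1).toNat < w := by omega
  have hj : (y - o.2).toNat < h := by omega
  simp only [ofRows, hx₀, hy₀, and_self, if_true]
  rw [List.getD_eq_getElem (tabulate o w h c) _ (by simpa [tabulate] using hj)]
  simp only [tabulate, List.getElem_map, List.getElem_range]
  rw [List.getD_eq_getElem _ _ (by simpa using hi)]
  simp only [List.getElem_map, List.getElem_range]
  congr 2 <;> omega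

theorem ofRows_tabulate_of_not_mem {c : Config} {p : Cell} (hp : p ∉ window o w h) :
    ofRows o (tabulate o w h c) p = 0 :=
  ofRows_eq_zero_of_not_mem (by simp [tabulate]) (by simp [tabulate]) hp

theorem ofRows_tabulate {c : Config} (hc : ∀ p ∉ window o w h, c p = 0) :
    ofRows o (tabulate o w h c) = c := by
  funext p
  by_cases hp : p ∈ window o w h
  · exact ofRows_tabulate_of_mem hp
  · rw [hc p hp, ofRows_tabulate_of_not_mem hp]

end Window

section Simulation

variable {𝒩 : Finset Cell}

theorem F_apply_eq_zero {S : Set Cell} {c : Config} (hc : ∀ p ∉ S, c p = 0)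
    (hS : ∀ q, θ 𝒩 ≤ c q → ∀ p' ∈ 𝒩, q + p' ∈ S) {p : Cell} (hp : p ∉ S) : F 𝒩 c p = 0 := by
  have hsum : ∑ p' ∈ 𝒩, (if θ 𝒩 ≤ c (p - p') then 1 else 0) = 0 :=
    Finset.sum_eq_zero fun p' hp' => if_neg fun hfire => hp (by simpa using hS _ hfire p' hp')
  simp [F, hc p hp, hsum]

variable {o : Cell} {w h : ℕ}

def step (𝒩 : Finset Cell) (o : Cell) (w h : ℕ) (L : List (List ℕ)) : List (List ℕ) :=
  tabulate o w h (F 𝒩 (ofRows o L))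

def simulate (𝒩 : Finset Cell) (o : Cell) (w h : ℕ) (c : Config) (t : ℕ) : List (List ℕ) :=
  (step 𝒩 o w h)^[t] (tabulate o w h c)

theorem simulate_succ (c : Config) (t : ℕ) :
    simulate 𝒩 o w h c (t + 1) = step 𝒩 o w h (simulate 𝒩 o w h c t) :=
  Function.iterate_succ_apply' _ _ _

theorem ofRows_simulate_of_not_mem {c : Config} {p : Cell} (hp : p ∉ window o w h) (t : ℕ) :
    ofRows o (simulate 𝒩 o w h c t) p = 0 := by
  cases t with
  | zero => exact ofRows_tabulate_of_not_mem hp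
  | succ t => rw [simulate_succ]; exact ofRows_tabulate_of_not_mem hp

def TopplesInside (𝒩 : Finset Cell) (o : Cell) (w h : ℕ) (L : List (List ℕ)) : Prop :=
  ∀ i < w, ∀ j < h, θ 𝒩 ≤ ofRows o L (o.1 + i, o.2 + j) →
    ∀ p' ∈ 𝒩, (o.1 + i, o.2 + j) + p' ∈ window o w h

instance (𝒩 : Finset Cell) (o : Cell) (w h : ℕ) (L : List (List ℕ)) :
    Decidable (TopplesInside 𝒩 o w h L) := by
  unfold TopplesInside; infer_instance

theorem F_ofRows {L : List (List ℕ)} (hL : ∀ p ∉ window o w h, ofRows o L p = 0)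
    (hT : TopplesInside 𝒩 o w h L) : F 𝒩 (ofRows o L) = ofRows o (step 𝒩 o w h L) := by
  refine (ofRows_tabulate fun p hp => F_apply_eq_zero hL (fun q hq p' hp' => ?_) hp).symm
  by_cases hqW : q ∈ window o w h
  · exact (forall_mem_window
      (P := fun q => θ 𝒩 ≤ ofRows o L q → ∀ p' ∈ 𝒩, q + p' ∈ window o w h)).2 hT q hqW hq p' hp'
  · rw [hL q hqW, Nat.le_zero, θ, Finset.card_eq_zero] at hq
    simp [hq] at hp'

theorem iterate_F_eq_ofRows_simulate {c : Config} (hc : ∀ p ∉ window o w h, c p = 0) {T : ℕ}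
    (hT : ∀ t < T, TopplesInside 𝒩 o w h (simulate 𝒩 o w h c t)) :
    ∀ t ≤ T, (F 𝒩)^[t] c = ofRows o (simulate 𝒩 o w h c t) := by
  intro t ht
  induction t with
  | zero => exact (ofRows_tabulate hc).symm
  | succ t ih =>
    rw [Function.iterate_succ_apply', ih (by omega),
      F_ofRows (fun p hp => ofRows_simulate_of_not_mem hp t) (hT t (by omega)), simulate_succ]

end Simulation

theorem rect_eq_window (M N' : ℕ) : Rect M N' = window 0 M N' := by
  ext p; simp [Rect, window]

theorem side_subset_rect {M N' : ℕ} (hM : 0 < M) (hN : 0 < N') (i : Fin 4) :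
    side M N' i ⊆ Rect M N' := by
  intro p hp
  unfold side at hp
  split_ifs at hp <;>
    (simp only [Set.mem_ofPred_eq] at hp; simp only [Rect, Set.mem_ofPred_eq]; omega)

instance (M N' : ℕ) (i : Fin 4) : DecidablePred (· ∈ side M N' i) := fun _ => by
  unfold side; split_ifs <;> infer_instance

abbrev nbhd111 : Finset Cell := {(1,0),(0,-1),(-1,1),(1,1),(1,-1),(-1,-1)}

-- Row `j` lists the cells `(0, j), …, (9, j)`: the picture is the gate upside down.
def gate : Config := ofRows 0
  [[0, 0, 0, 0, 0, 5, 0, 0, 0, 0],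
   [0, 5, 4, 0, 2, 3, 0, 5, 2, 0],
   [0, 3, 5, 4, 2, 4, 4, 4, 0, 0],
   [0, 5, 5, 1, 5, 5, 4, 2, 4, 0],
   [0, 2, 5, 4, 3, 3, 4, 5, 0, 5],
   [0, 5, 0, 4, 3, 0, 5, 5, 2, 0],
   [0, 5, 2, 5, 5, 4, 2, 2, 5, 0],
   [5, 3, 0, 1, 5, 2, 2, 1, 0, 0],
   [0, 0, 5, 4, 3, 2, 5, 0, 2, 0],
   [0, 0, 5, 0, 0, 0, 0, 0, 0, 0]]

theorem gate_eq_zero_of_not_mem {p : Cell} (hp : p ∉ Rect 10 10) : gate p = 0 :=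
  ofRows_eq_zero_of_not_mem (by decide) (by decide) (rect_eq_window 10 10 ▸ hp)

theorem stable_gate : Stable nbhd111 gate := by
  intro p
  by_cases hp : p ∈ Rect 10 10
  · rw [rect_eq_window] at hp
    exact (forall_mem_window (P := fun p => gate p < θ nbhd111)).2 (by decide +kernel) p hp
  · simp [gate_eq_zero_of_not_mem hp, θ]

def gateOrbit (q : Cell) (t : ℕ) : List (List ℕ) :=
  simulate nbhd111 (-1, -1) 12 12 (gate + one q) t

theorem gate_transmits {q r : Cell} {a b : Fin 4} (hq : q ∈ Rect 10 10)
    (hT : ∀ t < 12, TopplesInside nbhd111 (-1, -1) 12 12 (gateOrbit q t))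
    (harrive : θ nbhd111 ≤ ofRows (-1, -1) (gateOrbit q 12) r)
    (hquiet : ∀ i < (10 : ℕ), ∀ j < (10 : ℕ), ((i : ℤ), (j : ℤ)) ∈ side 10 10 a ∪ side 10 10 b →
      ∀ t ≤ 12, ofRows (-1, -1) (gateOrbit q t) (i, j) < θ nbhd111) :
    θ nbhd111 ≤ (F nbhd111)^[12] (gate + one q) r ∧
      ∀ p ∈ side 10 10 a ∪ side 10 10 b, ∀ t ≤ 12, (F nbhd111)^[t] (gate + one q) p < θ nbhd111 := by
  have hvanish : ∀ p ∉ window (-1, -1) 12 12, (gate + one q) p = 0 := by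
    intro p hp
    have hpR : p ∉ Rect 10 10 := by
      simp only [Rect, window, Set.mem_ofPred_eq] at hp ⊢
      omega
    have hpq : p ≠ q := fun h => hpR (h ▸ hq)
    simp [gate_eq_zero_of_not_mem hpR, one, hpq]
  have hsim := iterate_F_eq_ofRows_simulate hvanish hT
  refine ⟨hsim 12 le_rfl ▸ harrive, fun p hp t ht => ?_⟩
  rw [hsim t ht]
  have hpR : p ∈ window 0 10 10 :=
    rect_eq_window 10 10 ▸ Set.union_subset (side_subset_rect (by norm_num) (by norm_num) a)
      (side_subset_rect (by norm_num) (by norm_num) b) hp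
  exact (forall_mem_window (P := fun p => p ∈ side 10 10 a ∪ side 10 10 b → ∀ t ≤ 12,
      ofRows (-1, -1) (gateOrbit q t) p < θ nbhd111)).2
    (by simpa using hquiet) p hpR hp t ht

theorem nbhd111_timed_crossover :
    ∃ g n e s w, IsTimedCrossoverGate
      ({(1,0),(0,-1),(-1,1),(1,1),(1,-1),(-1,-1)} : Finset Cell) 10 10 12 g n e s w := by
  obtain ⟨hsouth, hquietN⟩ := gate_transmits (q := (2, 9)) (r := (5, 0)) (a := 0) (b := 2)
    (by simp [Rect]) (by decide +kernel) (by decide +kernel) (by decide +kernel)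
  obtain ⟨heast, hquietW⟩ := gate_transmits (q := (0, 7)) (r := (9, 4)) (a := 3) (b := 1)
    (by simp [Rect]) (by decide +kernel) (by decide +kernel) (by decide +kernel)
  exact ⟨gate, (2, 9), (9, 4), (5, 0), (0, 7), stable_gate, fun p => gate_eq_zero_of_not_mem,
    by simp [Rect], by simp [Rect], by simp [Rect], by simp [Rect],
    by simp [Corners], by simp [Corners], by simp [Corners], by simp [Corners],
    3, 2, 1, 0, by decide, by decide, by decide, by decide, rfl, rfl, by decide,
    hsouth, hquietN, heast, hquietW⟩

end Sandpile
end

section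
/- Let N be a sandpile model on ℤ² such that every element (x,y) ∈ N has odd second coordinate y. Let c be a stable configuration and p = (p₁,p₂) ∈ ℤ². Then for every t ∈ ℕ and every cell q = (q₁,q₂) ∈ ℤ², if F^t(c + 1_p)(q) ≥ θ then t ≡ q₂ − p₂ (mod 2). In particular, the parity of the time step at which a cell can reach the threshold is determined by the parity of its second coordinate. -/
namespace Sandpile

/-! Call a configuration `s`-polarised when every cell holds fewer than `2θ` grains and every
cell at or above the threshold lies on a row of parity `s`. Since every neighbour vector has
odd second coordinate, a toppling cell of an `s`-polarised configuration has no toppling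
neighbour, so it drops below `θ`; a non-toppling cell receives at most `θ` grains, and only
from rows of parity `s`, so it can reach `θ` only if it lies on a row of parity `s + 1`.
Hence `F` maps `s`-polarised configurations to `(s + 1)`-polarised ones, and `c + 1_p` is
`p.2`-polarised. -/

theorem sum_toppling_neighbors_le (𝒩 : Finset Cell) (d : Config) (q : Cell) :
    ∑ p' ∈ 𝒩, (if θ 𝒩 ≤ d (q - p') then 1 else 0) ≤ θ 𝒩 :=
  calc ∑ p' ∈ 𝒩, (if θ 𝒩 ≤ d (q - p') then 1 else 0)
      ≤ ∑ _p' ∈ 𝒩, 1 := Finset.sum_le_sum fun _ _ => by split <;> omega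
    _ = θ 𝒩 := by simp [θ]

section Dynamics

variable {𝒩 : Finset Cell} {d : Config} {q : Cell}

theorem F_apply_of_lt (h : d q < θ 𝒩) :
    F 𝒩 d q = d q + ∑ p' ∈ 𝒩, (if θ 𝒩 ≤ d (q - p') then 1 else 0) := by
  simp [F, not_le.mpr h]

theorem F_apply_of_le (h : θ 𝒩 ≤ d q) (hnb : ∀ p' ∈ 𝒩, d (q - p') < θ 𝒩) :
    F 𝒩 d q = d q - θ 𝒩 := by
  have hzero : ∑ p' ∈ 𝒩, (if θ 𝒩 ≤ d (q - p') then 1 else 0) = 0 :=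
    Finset.sum_eq_zero fun p' hp' => if_neg (not_le.mpr (hnb p' hp'))
  simp [F, h, hzero]

theorem exists_toppling_neighbor_of_lt_of_le_F (h : d q < θ 𝒩) (hF : θ 𝒩 ≤ F 𝒩 d q) :
    ∃ p' ∈ 𝒩, θ 𝒩 ≤ d (q - p') := by
  rw [F_apply_of_lt h] at hF
  obtain ⟨p', hp', hne⟩ := Finset.exists_ne_zero_of_sum_ne_zero (by omega :
    ∑ p' ∈ 𝒩, (if θ 𝒩 ≤ d (q - p') then 1 else 0) ≠ 0)
  exact ⟨p', hp', by_contra fun hlt => hne (if_neg hlt)⟩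

end Dynamics

structure IsPolarised (𝒩 : Finset Cell) (s : ℤ) (d : Config) : Prop where
  lt_two_mul : ∀ q, d q < 2 * θ 𝒩
  modEq_of_le : ∀ q, θ 𝒩 ≤ d q → q.2 ≡ s [ZMOD 2]

namespace IsPolarised

variable {𝒩 : Finset Cell} {s : ℤ} {d : Config}

theorem modEq_of_le_sub (hodd : ∀ v ∈ 𝒩, Odd v.2) (hd : IsPolarised 𝒩 s d)
    {q p' : Cell} (hp' : p' ∈ 𝒩) (h : θ 𝒩 ≤ d (q - p')) : q.2 ≡ s + 1 [ZMOD 2] := by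
  have hrow := hd.modEq_of_le _ h
  obtain ⟨m, hm⟩ := hodd p' hp'
  simp only [Prod.snd_sub, Int.ModEq] at hrow ⊢
  omega

theorem neighbor_lt_of_le (hodd : ∀ v ∈ 𝒩, Odd v.2) (hd : IsPolarised 𝒩 s d)
    {q : Cell} (hq : θ 𝒩 ≤ d q) : ∀ p' ∈ 𝒩, d (q - p') < θ 𝒩 := fun p' hp' =>
  not_le.mp fun hle => by
    have h₁ := hd.modEq_of_le q hq
    have h₂ := hd.modEq_of_le_sub hodd hp' hle
    simp only [Int.ModEq] at h₁ h₂
    omega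

theorem map_F (hodd : ∀ v ∈ 𝒩, Odd v.2) (hd : IsPolarised 𝒩 s d) :
    IsPolarised 𝒩 (s + 1) (F 𝒩 d) := by
  refine ⟨fun q => ?_, fun q hq => ?_⟩ <;> by_cases hle : θ 𝒩 ≤ d q
  · rw [F_apply_of_le hle (hd.neighbor_lt_of_le hodd hle)]
    have := hd.lt_two_mul q
    omega
  · rw [F_apply_of_lt (not_le.mp hle)]
    have := sum_toppling_neighbors_le 𝒩 d q
    omega
  · rw [F_apply_of_le hle (hd.neighbor_lt_of_le hodd hle)] at hq
    have := hd.lt_two_mul q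
    omega
  · obtain ⟨p', hp', hfire⟩ := exists_toppling_neighbor_of_lt_of_le_F (not_le.mp hle) hq
    exact hd.modEq_of_le_sub hodd hp' hfire

theorem iterate_F (hodd : ∀ v ∈ 𝒩, Odd v.2) (hd : IsPolarised 𝒩 s d) (t : ℕ) :
    IsPolarised 𝒩 (s + t) ((F 𝒩)^[t] d) := by
  induction t with
  | zero => simpa using hd
  | succ t ih =>
    rw [Function.iterate_succ_apply', Nat.cast_succ, ← add_assoc]
    exact ih.map_F hodd

end IsPolarised

theorem Stable.isPolarised_add_one {𝒩 : Finset Cell} {c : Config} (hc : Stable 𝒩 c)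
    (p : Cell) : IsPolarised 𝒩 p.2 (c + one p) := by
  have hone (q : Cell) : (c + one p) q = c q + if q = p then 1 else 0 := rfl
  refine ⟨fun q => ?_, fun q hq => ?_⟩ <;> have := hc q <;> rw [hone] at *
  · split <;> omega
  · obtain rfl : q = p := by
      by_contra hqp
      rw [if_neg hqp] at hq
      omega
    rfl

theorem parity_of_firing_times_general
    (𝒩 : Finset Cell)
    (hodd : ∀ v ∈ 𝒩, Odd v.2)
    (c : Config) (hc : Stable 𝒩 c) (p : Cell) :
    ∀ t : ℕ, ∀ q : Cell, θ 𝒩 ≤ (F 𝒩)^[t] (c + one p) q →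
      (t : ℤ) ≡ q.2 - p.2 [ZMOD 2] := by
  intro t q hq
  have hrow := ((hc.isPolarised_add_one p).iterate_F hodd t).modEq_of_le q hq
  simp only [Int.ModEq] at hrow ⊢
  omega

/-- Parity obstruction: if every neighbor has odd second coordinate, then the
time at which a cell can reach the threshold has parity determined by the
second coordinates. -/
theorem parity_of_firing_times
    (𝒩 : Finset Cell) (h0 : ((0, 0) : Cell) ∉ 𝒩)
    (hodd : ∀ v ∈ 𝒩, Odd v.2)
    (c : Config) (hc : Stable 𝒩 c) (p : Cell) :
    ∀ t : ℕ, ∀ q : Cell, θ 𝒩 ≤ (F 𝒩)^[t] (c + one p) q →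
      (t : ℤ) ≡ q.2 - p.2 [ZMOD 2] :=
  parity_of_firing_times_general 𝒩 hodd c hc p

end Sandpile
end
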